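/- arXiv:2010.14494 — 8 statements merged into one kernel-verified Lean document; each statement's English description precedes it below -/
import Mathlib

section
/- Let a = r/q be a rational number in lowest terms with q >= 2. Then R_+(a) equals Z[1/q], the ring of rational numbers whose denominator divides a power of q. -/
open Finset

/-- `binom(a,n) = a(a-1)⋯(a-n+1)/n!` for a complex number `a`. -/
noncomputable def binomC (a : ℂ) (n : ℕ) : ℂ :=
  (∏ i ∈ Finset.range n, (a - (i : ℂ))) / (n.factorial : ℂ)

/-- `R₊(a)`: the additive submonoid of `ℂ` generated by the binomial coefficients of `a`. -/
noncomputable def RplusSet (a : ℂ) : Set ℂ :=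
  (AddSubmonoid.closure (Set.range (binomC a)) : AddSubmonoid ℂ)

/-!
Write `a = r / q` and `A n = ∏_{j<n} (r - j q)`, so that `q ^ n * n! * binom(a, n) = A n`.

Every `binom(a, n)` lies in `ℤ[1/q]`: split `n! = u * w` with `u` coprime to `q` and `w ∣ q ^ k`.
Modulo `u` the number `q` is invertible, so `A n ≡ q ^ n * ∏_{j<n} (s - j)` for some integer `s`,
and `n!` divides that product; hence `n! ∣ q ^ k * A n`.

Conversely `A n` is coprime to `q`, so by Bézout `1 / q ^ n` is an integer combination of
`n! * binom(a, n)` and `1 = binom(a, 0)`. Integer combinations of the `binom(a, n)` stay in `R₊(a)`: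
some `A N` is negative, which puts `-1` into `R₊(a)`, and then `-binom(a, n)` too, since a positive
multiple of `binom(a, n)` is an integer.
-/

open scoped Nat

theorem factorial_dvd_prod_range_sub (s : ℤ) (n : ℕ) :
    (n ! : ℤ) ∣ ∏ j ∈ range n, (s - j) :=
  ⟨Ring.choose s n, by
    rw [← descPochhammer_eval_eq_prod_range, Polynomial.eval_eq_smeval,
      Ring.descPochhammer_eq_factorial_smul_choose, nsmul_eq_mul]⟩

theorem dvd_prod_range_sub_mul_of_isCoprime {u q : ℤ} (r : ℤ) {n : ℕ} (hu : IsCoprime u q)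
    (hdvd : u ∣ n !) : u ∣ ∏ j ∈ range n, (r - j * q) := by
  obtain ⟨x, y, hxy⟩ := hu.symm
  have hprod : ∏ j ∈ range n, (r - j * q) ≡ q ^ n * ∏ j ∈ range n, (r * x - j) [ZMOD u] := by
    rw [← card_range n, ← prod_const, card_range, ← prod_mul_distrib]
    refine Int.ModEq.prod fun j _ => ?_
    rw [Int.modEq_iff_dvd]
    exact ⟨-(r * y), by linear_combination r * hxy⟩
  refine Int.modEq_zero_iff_dvd.1 (hprod.trans (Int.modEq_zero_iff_dvd.2 ?_))
  exact (hdvd.trans (factorial_dvd_prod_range_sub _ n)).mul_left _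

theorem exists_eq_mul_isCoprime_dvd_pow {R : Type*} [CommRing R] [IsDomain R]
    [IsPrincipalIdealRing R] {m : R} (hm : m ≠ 0) (q : R) :
    ∃ u w : R, ∃ k : ℕ, m = u * w ∧ IsCoprime u q ∧ w ∣ q ^ k := by
  induction m using UniqueFactorizationMonoid.induction_on_prime with
  | h₁ => exact absurd rfl hm
  | h₂ x hx =>
    exact ⟨x, 1, 0, (mul_one x).symm, isCoprime_one_left.of_isCoprime_of_dvd_left hx.dvd, one_dvd _⟩
  | h₃ a p ha hp ih =>
    obtain ⟨u, w, k, rfl, hu, hw⟩ := ih ha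
    by_cases hpq : p ∣ q
    · exact ⟨u, p * w, k + 1, by ring, hu, pow_succ' q k ▸ mul_dvd_mul hpq hw⟩
    · exact ⟨p * u, w, k, by ring, ((hp.coprime_iff_not_dvd).2 hpq).mul_left hu, hw⟩

theorem exists_factorial_dvd_pow_mul_prod_range_sub_mul (r q : ℤ) (n : ℕ) :
    ∃ k : ℕ, (n ! : ℤ) ∣ q ^ k * ∏ j ∈ range n, (r - j * q) := by
  obtain ⟨u, w, k, hn, hu, hw⟩ := exists_eq_mul_isCoprime_dvd_pow (m := (n ! : ℤ)) (by positivity) q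
  have hu_dvd := dvd_prod_range_sub_mul_of_isCoprime r hu (hn ▸ dvd_mul_right u w)
  exact ⟨k, hn ▸ mul_comm u w ▸ mul_dvd_mul hw hu_dvd⟩

theorem isCoprime_prod_range_sub_mul {r q : ℤ} (h : IsCoprime r q) (n : ℕ) :
    IsCoprime (∏ j ∈ range n, (r - j * q)) q :=
  IsCoprime.prod_left fun j _ => by simpa [sub_eq_add_neg] using h.add_mul_right_left (-j)

theorem exists_prod_range_neg {R : Type*} [CommRing R] [LinearOrder R] [IsStrictOrderedRing R]
    {f : ℕ → R} (hf : ∀ i, f i ≠ 0) {m : ℕ} (hm : f m < 0) : ∃ n, ∏ i ∈ range n, f i < 0 := by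
  rcases (prod_ne_zero_iff.2 fun i _ => hf i : ∏ i ∈ range m, f i ≠ 0).lt_or_gt with h | h
  · exact ⟨m, h⟩
  · exact ⟨m + 1, by rw [prod_range_succ]; exact mul_neg_of_pos_of_neg h hm⟩

namespace AddSubmonoid

variable {G : Type*} [AddCommGroup G] {M : AddSubmonoid G} {x : G}

theorem neg_mem_of_neg_nsmul_mem {n : ℕ} (hx : x ∈ M) (hn : n ≠ 0) (h : -(n • x) ∈ M) :
    -x ∈ M := by
  obtain ⟨n, rfl⟩ := Nat.exists_eq_succ_of_ne_zero hn
  have hsplit : -x = n • x + -((n + 1) • x) := by rw [succ_nsmul]; abel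
  exact hsplit ▸ add_mem (nsmul_mem hx n) h

theorem zsmul_mem_of_neg_mem (hx : x ∈ M) (hnx : -x ∈ M) : ∀ k : ℤ, k • x ∈ M
  | (k : ℕ) => by simpa using nsmul_mem hx k
  | .negSucc k => by rw [negSucc_zsmul, ← neg_nsmul]; exact nsmul_mem hnx (k + 1)

theorem zsmul_mem_of_nsmul_eq_intCast {R : Type*} [Ring R] {M : AddSubmonoid R} (h1 : 1 ∈ M)
    (hneg1 : -1 ∈ M) {x : R} (hx : x ∈ M) {n : ℕ} (hn : n ≠ 0) {A : ℤ} (hA : n • x = A) (k : ℤ) :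
    k • x ∈ M := by
  refine zsmul_mem_of_neg_mem hx (neg_mem_of_neg_nsmul_mem hx hn ?_) k
  rw [hA, ← Int.cast_neg, ← zsmul_one]
  exact zsmul_mem_of_neg_mem h1 hneg1 _

end AddSubmonoid

theorem exists_prod_range_sub_mul_neg {r q : ℤ} (hq : 1 < q) (h : IsCoprime r q) :
    ∃ n, ∏ j ∈ range n, (r - j * q) < 0 := by
  refine exists_prod_range_neg (fun j hj => ?_) (m := r.toNat + 1)
    (by push_cast; nlinarith [r.self_le_toNat])
  have hq_unit : IsUnit q := h.symm.isUnit_of_dvd' dvd_rfl ⟨j, by linarith⟩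
  rw [Int.isUnit_iff] at hq_unit
  omega

theorem pow_mul_factorial_mul_binomC (r : ℤ) {q : ℕ} (hq : q ≠ 0) (n : ℕ) :
    (q : ℂ) ^ n * n ! * binomC (r / q) n = ((∏ j ∈ range n, (r - j * (q : ℤ)) : ℤ) : ℂ) := by
  rw [binomC, mul_assoc, mul_div_cancel₀ _ (mod_cast n.factorial_ne_zero), ← card_range n,
    ← prod_const, card_range, ← prod_mul_distrib, Int.cast_prod]
  refine prod_congr rfl fun j _ => ?_
  push_cast
  field_simp

theorem exists_binomC_eq_intCast_div_pow (r : ℤ) {q : ℕ} (hq : q ≠ 0) (n : ℕ) :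
    ∃ (z : ℤ) (k : ℕ), binomC (r / q) n = z / q ^ k := by
  obtain ⟨k, m, hm⟩ := exists_factorial_dvd_pow_mul_prod_range_sub_mul r q n
  refine ⟨m, n + k, (eq_div_iff (pow_ne_zero _ (mod_cast hq))).2
    (mul_left_cancel₀ (a := (n ! : ℂ)) (mod_cast n.factorial_ne_zero) ?_)⟩
  have hmC : (q : ℂ) ^ k * ((∏ j ∈ range n, (r - j * (q : ℤ)) : ℤ) : ℂ) = n ! * m := by
    exact_mod_cast hm
  linear_combination (q : ℂ) ^ k * pow_mul_factorial_mul_binomC r hq n + hmC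

theorem RplusSet_subset {q : ℕ} (hq : q ≠ 0) (r : ℤ) :
    RplusSet (r / q) ⊆ {x : ℂ | ∃ (z : ℤ) (k : ℕ), x = z / q ^ k} := by
  intro x hx
  induction hx using AddSubmonoid.closure_induction with
  | mem _ h =>
    obtain ⟨n, rfl⟩ := h
    exact exists_binomC_eq_intCast_div_pow r hq n
  | zero => exact ⟨0, 0, by simp⟩
  | add _ _ _ _ h₁ h₂ =>
    obtain ⟨z₁, k₁, rfl⟩ := h₁
    obtain ⟨z₂, k₂, rfl⟩ := h₂
    exact ⟨z₁ * q ^ k₂ + z₂ * q ^ k₁, k₁ + k₂, by push_cast; field_simp; ring⟩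

theorem one_mem_closure_range_binomC (a : ℂ) :
    (1 : ℂ) ∈ AddSubmonoid.closure (Set.range (binomC a)) :=
  AddSubmonoid.subset_closure ⟨0, by simp [binomC]⟩

theorem neg_one_mem_closure_range_binomC {r : ℤ} {q : ℕ} (hq : 2 ≤ q) (hrq : IsCoprime r q) :
    (-1 : ℂ) ∈ AddSubmonoid.closure (Set.range (binomC (r / q))) := by
  obtain ⟨N, hN⟩ := exists_prod_range_sub_mul_neg (by omega) hrq
  refine AddSubmonoid.neg_mem_of_neg_nsmul_mem (one_mem_closure_range_binomC _)
    (Int.natAbs_ne_zero.2 hN.ne) ?_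
  have hA : -((∏ j ∈ range N, (r - j * (q : ℤ))).natAbs • (1 : ℂ)) =
      ((∏ j ∈ range N, (r - j * (q : ℤ)) : ℤ) : ℂ) := by
    simp [abs_of_neg hN]
  rw [hA, ← pow_mul_factorial_mul_binomC r (by omega) N, ← Nat.cast_pow, ← Nat.cast_mul,
    ← nsmul_eq_mul]
  exact nsmul_mem (AddSubmonoid.subset_closure (Set.mem_range_self N)) _

theorem intCast_div_pow_mem_RplusSet {r : ℤ} {q : ℕ} (hq : 2 ≤ q) (hrq : IsCoprime r q) (z : ℤ)
    (n : ℕ) : (z : ℂ) / q ^ n ∈ RplusSet (r / q) := by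
  have hq0 : q ≠ 0 := by omega
  have one_mem := one_mem_closure_range_binomC (r / q)
  have neg_one_mem := neg_one_mem_closure_range_binomC hq hrq
  have zsmul_binomC_mem := AddSubmonoid.zsmul_mem_of_nsmul_eq_intCast one_mem neg_one_mem
    (AddSubmonoid.subset_closure ⟨n, rfl⟩) (n := q ^ n * n !) (by positivity)
    (by rw [nsmul_eq_mul, ← pow_mul_factorial_mul_binomC r hq0 n]; push_cast; rfl)
  obtain ⟨x, y, hxy⟩ := (isCoprime_prod_range_sub_mul hrq n).pow_right (n := n)
  have hxyC : (x : ℂ) * ((∏ j ∈ range n, (r - j * (q : ℤ)) : ℤ) : ℂ) + y * q ^ n = 1 := by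
    exact_mod_cast hxy
  have hz : (z : ℂ) / q ^ n = (z * x * n !) • binomC (r / q) n + (z * y) • (1 : ℂ) := by
    rw [zsmul_eq_mul, zsmul_eq_mul, div_eq_iff (pow_ne_zero _ (mod_cast hq0))]
    push_cast
    linear_combination (-z : ℂ) * hxyC - (z * x : ℂ) * pow_mul_factorial_mul_binomC r hq0 n
  exact hz ▸ add_mem (zsmul_binomC_mem _) (AddSubmonoid.zsmul_mem_of_neg_mem one_mem neg_one_mem _)

/-- For `a = r/q` rational in lowest terms with `q ≥ 2`, `R₊(a) = ℤ[1/q]`. -/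
theorem Rplus_rational (r : ℤ) (q : ℕ) (hq : 2 ≤ q) (hcop : IsCoprime r (q : ℤ)) :
    RplusSet ((r : ℂ) / (q : ℂ)) = {x : ℂ | ∃ (z : ℤ) (n : ℕ), x = (z : ℂ) / (q : ℂ) ^ n} :=
  (RplusSet_subset (by omega) r).antisymm fun _ ⟨z, n, hx⟩ =>
    hx ▸ intCast_div_pow_mem_RplusSet hq hcop z n
end

section
/- For a rational number a = r/q in lowest terms and any prime p not dividing q, and any k >= 0, the p-adic valuation of the product r(r-q)(r-2q)...(r-(k-1)q) is at least v_p(k!); consequently binom(a,k) lies in Z[1/q]. -/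
/-!
Modulo any `m` coprime to `q`, multiplying by an inverse `u` of `q` gives
`∏ (r - q i) ≡ q ^ k ∏ (u r - i)`, and `k!` divides every product of `k` consecutive integers.
Taking `m = p ^ v_p(k!)` gives the valuation bound. For the primes dividing `q` one has instead
`v_p(k!) ≤ k ≤ v_p(q ^ k)`, so `k! ∣ q ^ k ∏ (r - q i)`, and `binom(r/q, k)` is that quotient
divided by `q ^ (2k)`.
-/

open Finset

theorem Int.factorial_dvd_prod_range_sub (a : ℤ) (k : ℕ) :
    (k.factorial : ℤ) ∣ ∏ i ∈ Finset.range k, (a - i) := by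
  refine ⟨Ring.choose a k, ?_⟩
  rw [← descPochhammer_eval_eq_prod_range, Polynomial.eval_eq_smeval,
    Ring.descPochhammer_eq_factorial_smul_choose, nsmul_eq_mul]

theorem Int.dvd_prod_range_sub_mul_of_isCoprime {m q : ℤ} (r : ℤ) {k : ℕ}
    (hm : m ∣ k.factorial) (hqm : IsCoprime q m) :
    m ∣ ∏ i ∈ Finset.range k, (r - q * i) := by
  obtain ⟨u, v, huv⟩ := hqm
  have hcongr :
      ∏ i ∈ Finset.range k, (r - q * i) ≡ ∏ i ∈ Finset.range k, q * (u * r - i) [ZMOD m] :=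
    Int.ModEq.prod fun i _ => Int.modEq_iff_dvd.mpr ⟨-(v * r), by linear_combination r * huv⟩
  rw [hcongr.dvd_iff, ← pow_card_mul_prod]
  exact (hm.trans (Int.factorial_dvd_prod_range_sub _ k)).mul_left _

theorem Int.pow_padicValNat_factorial_dvd_prod_range_sub_mul {p : ℕ} (hp : p.Prime) {q : ℤ}
    (hpq : ¬ (p : ℤ) ∣ q) (r : ℤ) (k : ℕ) :
    (p : ℤ) ^ padicValNat p k.factorial ∣ ∏ i ∈ Finset.range k, (r - q * i) :=
  Int.dvd_prod_range_sub_mul_of_isCoprime r (mod_cast pow_padicValNat_dvd)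
    (((Nat.prime_iff_prime_int.mp hp).coprime_iff_not_dvd.mpr hpq).symm.pow_right)

theorem Int.natCast_dvd_of_forall_prime_pow_padicValNat_dvd {n : ℕ} (hn : n ≠ 0) {m : ℤ}
    (h : ∀ p : ℕ, p.Prime → (p : ℤ) ^ padicValNat p n ∣ m) : (n : ℤ) ∣ m := by
  refine Int.natCast_dvd.mpr <| (Nat.dvd_iff_prime_pow_dvd_dvd _ _).mpr fun p e hp hpe => ?_
  have : Fact p.Prime := ⟨hp⟩
  have he : e ≤ padicValNat p n := (padicValNat_dvd_iff_le hn).mp hpe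
  exact Int.natCast_dvd.mp <| by exact_mod_cast (pow_dvd_pow (p : ℤ) he).trans (h p hp)

theorem binomC_intCast_div (r : ℤ) {q : ℤ} (hq : q ≠ 0) (k : ℕ) :
    binomC ((r : ℂ) / q) k =
      ((∏ i ∈ Finset.range k, (r - q * i) : ℤ) : ℂ) / ((q : ℂ) ^ k * k.factorial) := by
  have hqC : (q : ℂ) ≠ 0 := Int.cast_ne_zero.mpr hq
  have hfactor : ∀ i ∈ Finset.range k, (r : ℂ) / q - i = (r - q * i) / q :=
    fun i _ => by field_simp
  rw [binomC, ← div_div, prod_congr rfl hfactor, prod_div_distrib, prod_const, card_range]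
  push_cast
  rfl

theorem Int.factorial_dvd_pow_mul_prod_range_sub_mul (r q : ℤ) (k : ℕ) :
    (k.factorial : ℤ) ∣ q ^ k * ∏ i ∈ Finset.range k, (r - q * i) := by
  refine Int.natCast_dvd_of_forall_prime_pow_padicValNat_dvd k.factorial_ne_zero fun p hp => ?_
  have : Fact p.Prime := ⟨hp⟩
  by_cases hpq : (p : ℤ) ∣ q
  · exact ((pow_dvd_pow _ (padicValNat_factorial_le (p := p) k)).trans
      (pow_dvd_pow_of_dvd hpq k)).mul_right _
  · exact (Int.pow_padicValNat_factorial_dvd_prod_range_sub_mul hp hpq r k).mul_left _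

theorem valuation_of_numerator_general (r : ℤ) (q : ℤ) (hq0 : q ≠ 0)
    (p : ℕ) (hp : p.Prime) (hpq : ¬ (p : ℤ) ∣ q) (k : ℕ) :
    ((p : ℤ) ^ (padicValNat p k.factorial) ∣ ∏ i ∈ Finset.range k, (r - q * (i : ℤ))) ∧
      ∃ (z : ℤ) (n : ℕ), binomC ((r : ℂ) / (q : ℂ)) k = (z : ℂ) / (q : ℂ) ^ n := by
  refine ⟨Int.pow_padicValNat_factorial_dvd_prod_range_sub_mul hp hpq r k, ?_⟩
  obtain ⟨z, hz⟩ := Int.factorial_dvd_pow_mul_prod_range_sub_mul r q k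
  refine ⟨z, 2 * k, ?_⟩
  have hqC : (q : ℂ) ≠ 0 := Int.cast_ne_zero.mpr hq0
  rw [binomC_intCast_div r hq0,
    div_eq_div_iff (by simp [hqC, k.factorial_ne_zero]) (pow_ne_zero _ hqC)]
  have hzC := congrArg (Int.cast : ℤ → ℂ) hz
  push_cast at hzC ⊢
  linear_combination (q : ℂ) ^ k * hzC

/-- For `a = r/q` in lowest terms and a prime `p ∤ q`, the `p`-adic valuation of
`r(r-q)⋯(r-(k-1)q)` is at least `v_p(k!)`; consequently `binom(a,k) ∈ ℤ[1/q]`. -/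
theorem valuation_of_numerator (r : ℤ) (q : ℤ) (hq0 : q ≠ 0) (hcop : IsCoprime r q)
    (p : ℕ) (hp : p.Prime) (hpq : ¬ (p : ℤ) ∣ q) (k : ℕ) :
    ((p : ℤ) ^ (padicValNat p k.factorial) ∣ ∏ i ∈ Finset.range k, (r - q * (i : ℤ))) ∧
      ∃ (z : ℤ) (n : ℕ), binomC ((r : ℂ) / (q : ℂ)) k = (z : ℂ) / (q : ℂ) ^ n :=
  valuation_of_numerator_general r q hq0 p hp hpq k
end

section
/- For nonnegative integers n, k and any integer-valued polynomial f with nonnegative coefficients in the binomial basis, the alternating sum binom(f(n),k) - C(n,1)*binom(f(n-1),k) + C(n,2)*binom(f(n-2),k) - ... + (-1)^n*binom(f(0),k) is nonnegative. -/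
/-!
Up to the reflection `i ↦ n - i`, the alternating sum is the `n`-th forward difference at `0` of
`g x = binom(f x, k)`. Functions whose forward differences of all orders are nonnegative contain
the binomials `binom(x, j)` and are closed under sums and products (by the Leibniz rule
`Δ(f g) = f(· + 1) Δg + Δf g`). They are also closed under `f ↦ binom(f, k)`: Vandermonde's
identity gives `Δ binom(f, k) = ∑ i < k, binom(Δf, i + 1) binom(f, k - i - 1)`, and induction on
the order applies to both factors.
-/

open Finset Function

theorem Nat.add_choose_eq_choose_add_sum (d f k : ℕ) :
    (d + f).choose k = f.choose k + ∑ i ∈ range k, d.choose (i + 1) * f.choose (k - (i + 1)) := by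
  rw [Nat.add_choose_eq, Finset.Nat.sum_antidiagonal_eq_sum_range_succ_mk, sum_range_succ',
    Nat.choose_zero_right, one_mul, Nat.sub_zero, add_comm]

theorem fwdDiff_iter_one_zero_eq_sum {G : Type*} [AddCommGroup G] (f : ℕ → G) (n : ℕ) :
    (fwdDiff 1)^[n] f 0 = ∑ i ∈ range (n + 1), ((-1 : ℤ) ^ i * n.choose i) • f (n - i) := by
  rw [fwdDiff_iter_eq_sum_shift, ← sum_range_reflect]
  refine sum_congr rfl fun i hi ↦ ?_
  have hin : i ≤ n := Nat.lt_succ_iff.1 (mem_range.1 hi)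
  rw [Nat.add_sub_cancel, Nat.sub_sub_self hin, Nat.choose_symm hin, zero_add, smul_eq_mul, mul_one]

def FwdDiffNonnegUpTo {M G : Type*} [AddCommMonoid M] [AddCommGroup G] [PartialOrder G]
    (h : M) (n : ℕ) (f : M → G) : Prop :=
  ∀ m ≤ n, ∀ x, 0 ≤ (fwdDiff h)^[m] f x

namespace FwdDiffNonnegUpTo

variable {M : Type*} [AddCommMonoid M] {h : M} {n : ℕ}

section AddGroup

variable {G : Type*} [AddCommGroup G] [PartialOrder G] {f g : M → G}

theorem zero_iff : FwdDiffNonnegUpTo h 0 f ↔ ∀ x, 0 ≤ f x := by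
  simp [FwdDiffNonnegUpTo]

theorem succ_iff :
    FwdDiffNonnegUpTo h (n + 1) f ↔ (∀ x, 0 ≤ f x) ∧ FwdDiffNonnegUpTo h n (fwdDiff h f) := by
  refine ⟨fun hf ↦ ⟨hf 0 (n + 1).zero_le, fun m hm x ↦ ?_⟩, fun ⟨hf₀, hf⟩ m hm x ↦ ?_⟩
  · rw [← iterate_succ_apply]
    exact hf (m + 1) (by omega) x
  · cases m with
    | zero => exact hf₀ x
    | succ m =>
      rw [iterate_succ_apply]
      exact hf m (by omega) x

theorem mono {m : ℕ} (hmn : m ≤ n) (hf : FwdDiffNonnegUpTo h n f) : FwdDiffNonnegUpTo h m f :=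
  fun m' hm' ↦ hf m' (hm'.trans hmn)

theorem comp_add (c : M) (hf : FwdDiffNonnegUpTo h n f) :
    FwdDiffNonnegUpTo h n (fun x ↦ f (x + c)) := by
  intro m hm x
  rw [fwdDiff_iter_comp_add]
  exact hf m hm _

variable [IsOrderedAddMonoid G]

theorem add (hf : FwdDiffNonnegUpTo h n f) (hg : FwdDiffNonnegUpTo h n g) :
    FwdDiffNonnegUpTo h n (f + g) := by
  intro m hm x
  rw [fwdDiff_iter_add]
  exact add_nonneg (hf m hm x) (hg m hm x)

theorem nsmul (c : ℕ) (hf : FwdDiffNonnegUpTo h n f) : FwdDiffNonnegUpTo h n (c • f) := by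
  intro m hm x
  rw [fwdDiff_iter_const_smul]
  exact nsmul_nonneg (hf m hm x) c

theorem finsetSum {ι : Type*} {s : Finset ι} {f : ι → M → G}
    (hf : ∀ i ∈ s, FwdDiffNonnegUpTo h n (f i)) : FwdDiffNonnegUpTo h n (∑ i ∈ s, f i) := by
  intro m hm x
  rw [fwdDiff_iter_finsetSum, Finset.sum_apply]
  exact sum_nonneg fun i hi ↦ hf i hi m hm x

end AddGroup

theorem mul {R : Type*} [Ring R] [PartialOrder R] [IsOrderedRing R] {f g : M → R}
    (hf : FwdDiffNonnegUpTo h n f) (hg : FwdDiffNonnegUpTo h n g) :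
    FwdDiffNonnegUpTo h n (f * g) := by
  induction n generalizing f g with
  | zero => exact zero_iff.2 fun x ↦ mul_nonneg (zero_iff.1 hf x) (zero_iff.1 hg x)
  | succ n ih =>
    obtain ⟨hf₀, hΔf⟩ := succ_iff.1 hf
    obtain ⟨hg₀, hΔg⟩ := succ_iff.1 hg
    refine succ_iff.2 ⟨fun x ↦ mul_nonneg (hf₀ x) (hg₀ x), ?_⟩
    have leibniz : fwdDiff h (f * g) = (fun x ↦ f (x + h)) * fwdDiff h g + fwdDiff h f * g := by
      funext x
      simp only [fwdDiff, Pi.mul_apply, Pi.add_apply]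
      noncomm_ring
    rw [leibniz]
    exact (ih ((hf.mono n.le_succ).comp_add h) hΔg).add (ih hΔf (hg.mono n.le_succ))

theorem natCast_choose (j : ℕ) : FwdDiffNonnegUpTo 1 n (fun x : ℕ ↦ (x.choose j : ℤ)) := by
  induction n generalizing j with
  | zero => exact zero_iff.2 fun x ↦ Nat.cast_nonneg _
  | succ n ih =>
    refine succ_iff.2 ⟨fun x ↦ Nat.cast_nonneg _, ?_⟩
    cases j with
    | zero =>
      have hΔ : fwdDiff 1 (fun x : ℕ ↦ (x.choose 0 : ℤ)) = fun _ ↦ 0 := by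
        simp only [Nat.choose_zero_right, Nat.cast_one, fwdDiff_const]
      intro m _ x
      rw [hΔ, iterate_fixed (fwdDiff_const 1 0)]
    | succ j =>
      rw [fwdDiff_choose]
      exact ih j

theorem natCast_choose_comp {f : M → ℕ} (k : ℕ) (hf : FwdDiffNonnegUpTo h n (fun x ↦ (f x : ℤ))) :
    FwdDiffNonnegUpTo h n (fun x ↦ ((f x).choose k : ℤ)) := by
  induction n generalizing f k with
  | zero => exact zero_iff.2 fun x ↦ Nat.cast_nonneg _
  | succ n ih =>
    obtain ⟨-, hΔf⟩ := succ_iff.1 hf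
    set d : M → ℕ := fun x ↦ f (x + h) - f x
    have hfd (x : M) : f (x + h) = d x + f x := by
      have := hΔf 0 n.zero_le x
      simp only [iterate_zero, id_eq, fwdDiff, sub_nonneg, Nat.cast_le] at this
      exact (Nat.sub_add_cancel this).symm
    have hd : (fun x ↦ (d x : ℤ)) = fwdDiff h (fun x ↦ (f x : ℤ)) := by
      funext x
      simp [fwdDiff, hfd x]
    have hΔ : fwdDiff h (fun x ↦ ((f x).choose k : ℤ)) = ∑ i ∈ range k,
        (fun x ↦ ((d x).choose (i + 1) : ℤ)) * (fun x ↦ ((f x).choose (k - (i + 1)) : ℤ)) := by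
      funext x
      simp only [fwdDiff, Finset.sum_apply, Pi.mul_apply]
      rw [hfd, Nat.add_choose_eq_choose_add_sum]
      push_cast
      ring
    refine succ_iff.2 ⟨fun x ↦ Nat.cast_nonneg _, ?_⟩
    rw [hΔ]
    exact finsetSum fun i _ ↦ (ih (i + 1) (hd ▸ hΔf)).mul (ih _ (hf.mono n.le_succ))

end FwdDiffNonnegUpTo

/-- For `f(x) = ∑_j a_j · binom(x,j)` with nonnegative integer coefficients, the alternating sum
`∑_{i=0}^n (-1)^i C(n,i) binom(f(n-i), k)` is nonnegative. -/
theorem alternating_sum_nonneg (t : ℕ) (a : ℕ → ℕ) (n k : ℕ) :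
    0 ≤ ∑ i ∈ Finset.range (n + 1),
        (-1 : ℤ) ^ i * (n.choose i : ℤ) *
          (((∑ j ∈ Finset.range (t + 1), a j * (n - i).choose j).choose k : ℤ)) := by
  set f : ℕ → ℕ := fun x ↦ ∑ j ∈ range (t + 1), a j * x.choose j
  have hf : FwdDiffNonnegUpTo 1 n (fun x ↦ (f x : ℤ)) := by
    have hsum : (fun x ↦ (f x : ℤ)) =
        ∑ j ∈ range (t + 1), a j • fun x : ℕ ↦ (x.choose j : ℤ) := by
      funext x
      simp [f, Finset.sum_apply]
    rw [hsum]
    exact FwdDiffNonnegUpTo.finsetSum fun j _ ↦ (FwdDiffNonnegUpTo.natCast_choose j).nsmul (a j)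
  have hΔ := hf.natCast_choose_comp k n le_rfl 0
  simpa only [fwdDiff_iter_one_zero_eq_sum, smul_eq_mul] using hΔ
end

section
/- If f(x) is a nonnegative integer linear combination of binomial coefficient polynomials binom(x,j), then for every k >= 0 the polynomial binom(f(x),k) is also a nonnegative integer linear combination of binomial coefficient polynomials; consequently, for any complex number a, if b is in R_+(a) then R_+(b) is contained in R_+(a). -/
open Polynomial Finset

/-- The binomial coefficient polynomial `binom(x,n) = x(x-1)⋯(x-n+1)/n!` in `ℚ[x]`. -/
noncomputable def binomPoly (n : ℕ) : Polynomial ℚ :=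
  Polynomial.C ((n.factorial : ℚ)⁻¹) * ∏ i ∈ Finset.range n, (Polynomial.X - Polynomial.C (i : ℚ))

/-- `R₊(x)`: the additive submonoid of `ℚ[x]` generated by the binomial polynomials. -/
noncomputable def RplusPoly : Set (Polynomial ℚ) :=
  (AddSubmonoid.closure (Set.range binomPoly) : AddSubmonoid (Polynomial ℚ))

/-- `binom(f(x),k) = f(x)(f(x)-1)⋯(f(x)-k+1)/k!`. -/
noncomputable def binomOf (f : Polynomial ℚ) (k : ℕ) : Polynomial ℚ :=
  Polynomial.C ((k.factorial : ℚ)⁻¹) * ∏ i ∈ Finset.range k, (f - Polynomial.C (i : ℚ))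

/-!
Let `ℛ` be the additive monoid spanned by the `binom(x,j)`. It is closed under products, since
Vandermonde's identity applied to `x = (x - i) + i` gives
`binom(x,i) binom(x,j) = ∑_{p+q=j} C(i,q) C(i+p,i) binom(x,i+p)`.
A polynomial `p` with `p(0) = 0` whose difference `p(x+1) - p(x)` lies in `ℛ` lies in `ℛ` itself,
because `binom(x,j+1)` is a primitive of `binom(x,j)`. For `g = binom(x,j+1)`, Pascal's rule
`g(x+1) = g(x) + binom(x,j)` and Vandermonde give
`binom(g,k+1)(x+1) - binom(g,k+1)(x) = ∑_{a+b=k} binom(g,a) binom(binom(x,j),b+1)`,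
so `binom(g,k) ∈ ℛ` by induction on `j` and then on `k`, and Vandermonde extends this from the
generators to all of `ℛ`. Hence `ℛ` is closed under composition; since `R₊(a)` is the image of
`ℛ` under evaluation at `a`, `b = f(a)` with `f ∈ ℛ` gives `R₊(b) = {g(f(a)) | g ∈ ℛ} ⊆ R₊(a)`.
-/

namespace Ring

theorem factorial_mul_choose_eq_prod {R : Type*} [CommRing R] [BinomialRing R] (r : R) (n : ℕ) :
    (n.factorial : R) * choose r n = ∏ i ∈ range n, (r - i) := by
  rw [← nsmul_eq_mul, ← descPochhammer_eq_factorial_smul_choose, ← aeval_eq_smeval, aeval_def,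
    eval₂_eq_eval_map, descPochhammer_map, descPochhammer_eval_eq_prod_range]

theorem choose_mul_choose {R : Type*} [CommRing R] [BinomialRing R] (r : R) (i j : ℕ) :
    choose r i * choose r j =
      ∑ pq ∈ antidiagonal j, (i.choose pq.2 * (i + pq.1).choose i) • choose r (i + pq.1) := by
  conv_lhs => rw [← sub_add_cancel r (i : R), add_choose_eq j (Commute.all _ _), mul_sum]
  refine sum_congr rfl fun pq _ => ?_
  rw [choose_natCast, mul_smul, choose_smul_choose r (Nat.le_add_right i pq.1),
    Nat.add_sub_cancel_left, nsmul_eq_mul, sub_add_cancel]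
  ring

end Ring

namespace Polynomial

theorem choose_comp {K : Type*} [Field K] [CharZero K] (g f : K[X]) (k : ℕ) :
    (Ring.choose g k).comp f = Ring.choose (g.comp f) k :=
  Ring.map_choose (compRingHom f) g k

theorem eval_choose {K : Type*} [Field K] [CharZero K] (g : K[X]) (r : K) (k : ℕ) :
    (Ring.choose g k).eval r = Ring.choose (g.eval r) k :=
  Ring.map_choose (evalRingHom r) g k

theorem eq_zero_of_comp_X_add_one_eq_self {R : Type*} [CommRing R] [IsDomain R] [CharZero R]
    {p : R[X]} (hp : p.comp (X + 1) = p) (h0 : p.eval 0 = 0) : p = 0 := by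
  have hroots : ∀ n : ℕ, p.IsRoot n := by
    intro n
    induction n with
    | zero => simpa using h0
    | succ n ih =>
      have hshift := congrArg (eval (n : R)) hp
      rw [eval_comp, eval_add, eval_X, eval_one] at hshift
      rwa [IsRoot, Nat.cast_succ, hshift]
  exact p.eq_zero_of_infinite_isRoot <|
    Set.infinite_of_injective_forall_mem Nat.cast_injective hroots

end Polynomial

theorem binomOf_eq_choose (f : ℚ[X]) (k : ℕ) : binomOf f k = Ring.choose f k := by
  simp only [binomOf, map_natCast]
  rw [← Ring.factorial_mul_choose_eq_prod, ← mul_assoc, ← map_natCast C, ← C_mul,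
    inv_mul_cancel₀ (Nat.cast_ne_zero.mpr k.factorial_ne_zero), C_1, one_mul]

theorem binomPoly_eq_choose (n : ℕ) : binomPoly n = Ring.choose X n :=
  binomOf_eq_choose X n

theorem binomC_eq_choose (a : ℂ) (n : ℕ) : binomC a n = Ring.choose a n := by
  rw [binomC, ← Ring.factorial_mul_choose_eq_prod,
    mul_div_cancel_left₀ _ (Nat.cast_ne_zero.mpr n.factorial_ne_zero)]

theorem binomPoly_comp_X_add_one (j : ℕ) :
    (binomPoly (j + 1)).comp (X + 1) = binomPoly (j + 1) + binomPoly j := by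
  rw [binomPoly_eq_choose, binomPoly_eq_choose, choose_comp, X_comp, Ring.choose_succ_succ,
    add_comm]

theorem eval_zero_binomPoly_succ (j : ℕ) : (binomPoly (j + 1)).eval 0 = 0 := by
  rw [binomPoly_eq_choose, eval_choose, eval_X, Ring.choose_zero_succ]

noncomputable def rplus : AddSubmonoid ℚ[X] :=
  AddSubmonoid.closure (Set.range binomPoly)

theorem binomPoly_mem_rplus (j : ℕ) : binomPoly j ∈ rplus :=
  AddSubmonoid.subset_closure ⟨j, rfl⟩

theorem natCast_mem_rplus (n : ℕ) : (n : ℚ[X]) ∈ rplus := by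
  rw [show (n : ℚ[X]) = n • binomPoly 0 by simp [binomPoly]]
  exact rplus.nsmul_mem (binomPoly_mem_rplus 0) n

theorem mul_mem_rplus {f g : ℚ[X]} (hf : f ∈ rplus) (hg : g ∈ rplus) : f * g ∈ rplus := by
  induction hf using AddSubmonoid.closure_induction with
  | mem _ hf =>
    induction hg using AddSubmonoid.closure_induction with
    | mem _ hg =>
      obtain ⟨i, rfl⟩ := hf
      obtain ⟨j, rfl⟩ := hg
      rw [binomPoly_eq_choose, binomPoly_eq_choose, Ring.choose_mul_choose]
      exact sum_mem fun pq _ => rplus.nsmul_mem (binomPoly_eq_choose _ ▸ binomPoly_mem_rplus _) _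
    | zero => simp [rplus.zero_mem]
    | add _ _ _ _ h₁ h₂ => simpa [mul_add] using rplus.add_mem h₁ h₂
  | zero => simp [rplus.zero_mem]
  | add _ _ _ _ h₁ h₂ => simpa [add_mul] using rplus.add_mem h₁ h₂

theorem exists_mem_rplus_comp_X_add_one_eq {q : ℚ[X]} (hq : q ∈ rplus) :
    ∃ p ∈ rplus, p.comp (X + 1) = p + q ∧ p.eval 0 = 0 := by
  induction hq using AddSubmonoid.closure_induction with
  | mem _ hq =>
    obtain ⟨j, rfl⟩ := hq
    exact ⟨binomPoly (j + 1), binomPoly_mem_rplus _, binomPoly_comp_X_add_one j,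
      eval_zero_binomPoly_succ j⟩
  | zero => exact ⟨0, rplus.zero_mem, by simp, by simp⟩
  | add _ _ _ _ h₁ h₂ =>
    obtain ⟨p₁, hp₁, hc₁, he₁⟩ := h₁
    obtain ⟨p₂, hp₂, hc₂, he₂⟩ := h₂
    exact ⟨p₁ + p₂, rplus.add_mem hp₁ hp₂, by rw [add_comp, hc₁, hc₂]; ring, by simp [he₁, he₂]⟩

theorem mem_rplus_of_comp_X_add_one_eq {p q : ℚ[X]} (hq : q ∈ rplus)
    (hpq : p.comp (X + 1) = p + q) (h0 : p.eval 0 = 0) : p ∈ rplus := by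
  obtain ⟨P, hP, hPq, hP0⟩ := exists_mem_rplus_comp_X_add_one_eq hq
  have hpP : p - P = 0 :=
    eq_zero_of_comp_X_add_one_eq_self (by rw [sub_comp, hpq, hPq]; ring) (by simp [h0, hP0])
  rwa [sub_eq_zero.mp hpP]

theorem choose_natCast_mem_rplus (n k : ℕ) : Ring.choose (n : ℚ[X]) k ∈ rplus := by
  rw [Ring.choose_natCast]
  exact natCast_mem_rplus _

theorem choose_add_mem_rplus {f g : ℚ[X]} (hf : ∀ k, Ring.choose f k ∈ rplus)
    (hg : ∀ k, Ring.choose g k ∈ rplus) (k : ℕ) : Ring.choose (f + g) k ∈ rplus := by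
  rw [Ring.add_choose_eq k (Commute.all f g)]
  exact sum_mem fun ij _ => mul_mem_rplus (hf ij.1) (hg ij.2)

theorem choose_binomPoly_mem_rplus (j k : ℕ) : Ring.choose (binomPoly j) k ∈ rplus := by
  induction j generalizing k with
  | zero => simpa [binomPoly] using choose_natCast_mem_rplus 1 k
  | succ j ihj =>
    induction k using Nat.strong_induction_on with
    | _ k ihk =>
      cases k with
      | zero => simpa [Ring.choose_zero_right] using natCast_mem_rplus 1
      | succ k =>
        refine mem_rplus_of_comp_X_add_one_eq (q := ∑ ab ∈ antidiagonal k,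
          Ring.choose (binomPoly (j + 1)) ab.1 * Ring.choose (binomPoly j) (ab.2 + 1))
          (sum_mem fun ab hab => mul_mem_rplus (ihk _ ?_) (ihj _)) ?_ ?_
        · have := mem_antidiagonal.mp hab
          omega
        · rw [choose_comp, binomPoly_comp_X_add_one, Ring.add_choose_eq _ (Commute.all _ _),
            Nat.sum_antidiagonal_succ', Ring.choose_zero_right, mul_one]
        · rw [eval_choose, eval_zero_binomPoly_succ, Ring.choose_zero_succ]

theorem choose_mem_rplus {f : ℚ[X]} (hf : f ∈ rplus) (k : ℕ) : Ring.choose f k ∈ rplus := by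
  induction hf using AddSubmonoid.closure_induction generalizing k with
  | mem _ hf =>
    obtain ⟨j, rfl⟩ := hf
    exact choose_binomPoly_mem_rplus j k
  | zero => simpa using choose_natCast_mem_rplus 0 k
  | add _ _ _ _ h₁ h₂ => exact choose_add_mem_rplus h₁ h₂ k

theorem comp_mem_rplus {g f : ℚ[X]} (hg : g ∈ rplus) (hf : f ∈ rplus) : g.comp f ∈ rplus := by
  induction hg using AddSubmonoid.closure_induction with
  | mem _ hg =>
    obtain ⟨j, rfl⟩ := hg
    rw [binomPoly_eq_choose, choose_comp, X_comp]
    exact choose_mem_rplus hf j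
  | zero => simp [rplus.zero_mem]
  | add _ _ _ _ h₁ h₂ => simpa [add_comp] using rplus.add_mem h₁ h₂

theorem RplusSet_eq_map (a : ℂ) : RplusSet a = rplus.map (aeval a) := by
  have hgen : Set.range (binomC a) = aeval a '' Set.range binomPoly := by
    rw [← Set.range_comp]
    congr 1
    ext n
    simp [binomC_eq_choose, binomPoly_eq_choose, Ring.map_choose]
  rw [RplusSet, hgen, rplus, AddMonoidHom.map_mclosure]

theorem binom_of_Rplus_mem_and_Rplus_mono :
    (∀ f ∈ RplusPoly, ∀ k : ℕ, binomOf f k ∈ RplusPoly) ∧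
      ∀ a b : ℂ, b ∈ RplusSet a → RplusSet b ⊆ RplusSet a := by
  refine ⟨fun f hf k => binomOf_eq_choose f k ▸ choose_mem_rplus hf k, ?_⟩
  intro a b hb c hc
  rw [RplusSet_eq_map] at hb hc ⊢
  obtain ⟨f, hf, rfl⟩ := hb
  obtain ⟨g, hg, rfl⟩ := hc
  exact ⟨g.comp f, comp_mem_rplus hg hf, aeval_comp a⟩
end

section
/- For any polynomial p in Q[x] with p(n) nonzero for every nonnegative integer n, there exists a polynomial s in Q[x] such that all coefficients of p(x)s(x) in the binomial coefficient basis are nonnegative and the constant term p(0)s(0) is strictly positive. -/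
open Polynomial Finset

/-- The finite difference operator `Δp(x) = p(x+1) - p(x)` on `ℚ[x]`. -/
noncomputable def deltaP (f : Polynomial ℚ) : Polynomial ℚ :=
  f.comp (Polynomial.X + 1) - f

/-!
Write `b_n(f) = (Δⁿf)(0)`. Every `Δⁱ(p²)` with `i ≤ deg p²` has positive leading coefficient, so
there is an `M > 0` with `Δⁱ(p²)(M) > 0` for all these `i`. Let `t` interpolate `1/p` at
`0, …, M-1`; then `pt = 1` there, so `b_0(pt) = 1` and `b_n(pt) = 0` for `0 < n < M`. The
falling factorial `(x)_M = descPochhammer ℚ M` vanishes at `0, …, M-1`, so `b_n((x)_M p²) = 0`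
for `n < M`, and `b_{M+i}((x)_M p²) = (M+i)_M · Δⁱ(p²)(M)`, positive for `i ≤ deg p²` and zero
beyond.
For `s = c (x)_M p + t` we get `b_n(ps) = c b_n((x)_M p²) + b_n(pt)`. With `c ≥ 0` this is
nonnegative for `n < M`, and also for `n > M + deg p²`, where `deg (pt) < n` makes both terms
vanish; on the finitely many `n` in between the first term is positive, so a large `c` works.
Finally `p(0)s(0) = (pt)(0) = 1`.
-/

open Filter fwdDiff

theorem fwdDiff_iter_congr {M G : Type*} [AddCommMonoid M] [AddCommGroup G] {h : M}
    {f g : M → G} {n : ℕ} {y : M} (hfg : ∀ k ≤ n, f (y + k • h) = g (y + k • h)) :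
    Δ_[h] ^[n] f y = Δ_[h] ^[n] g y := by
  simp only [fwdDiff_iter_eq_sum_shift]
  exact sum_congr rfl fun k hk ↦ by rw [hfg k (Nat.lt_succ_iff.mp (mem_range.mp hk))]

theorem Nat.choose_mul_descFactorial_add (M i j : ℕ) :
    (M + i).choose (M + j) * (M + j).descFactorial M = (M + i).descFactorial M * i.choose j := by
  rw [descFactorial_eq_factorial_mul_choose, descFactorial_eq_factorial_mul_choose,
    mul_left_comm, choose_mul (Nat.le_add_right M j), Nat.add_sub_cancel_left,
    Nat.add_sub_cancel_left]
  ring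

section descPochhammer

variable {R : Type*} [CommRing R]

theorem fwdDiff_iter_descPochhammer_mul_of_lt (f : R → R) {M n : ℕ} (hn : n < M) :
    Δ_[1] ^[n] (fun x ↦ (descPochhammer R M).eval x * f x) 0 = 0 := by
  rw [fwdDiff_iter_eq_sum_shift]
  refine sum_eq_zero fun k hk ↦ ?_
  rw [zero_add, nsmul_one, descPochhammer_eval_eq_descFactorial,
    Nat.descFactorial_eq_zero_iff_lt.mpr (by grind), Nat.cast_zero, zero_mul, smul_zero]

theorem fwdDiff_iter_add_descPochhammer_mul (f : R → R) (M i : ℕ) :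
    Δ_[1] ^[M + i] (fun x ↦ (descPochhammer R M).eval x * f x) 0
      = (M + i).descFactorial M * Δ_[1] ^[i] f M := by
  rw [fwdDiff_iter_eq_sum_shift, fwdDiff_iter_eq_sum_shift, mul_sum, add_assoc, sum_range_add,
    sum_eq_zero fun k hk ↦ ?_, zero_add]
  · refine sum_congr rfl fun j _ ↦ ?_
    rw [zero_add, nsmul_one, nsmul_one, descPochhammer_eval_eq_descFactorial,
      Nat.add_sub_add_left]
    have key := congrArg (Nat.cast : ℕ → R) (Nat.choose_mul_descFactorial_add M i j)
    push_cast at key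
    simp only [zsmul_eq_mul]
    push_cast
    linear_combination ((-1) ^ (i - j) * f (M + j)) * key
  · rw [zero_add, nsmul_one, descPochhammer_eval_eq_descFactorial,
      Nat.descFactorial_eq_zero_iff_lt.mpr (mem_range.mp hk), Nat.cast_zero, zero_mul, smul_zero]

end descPochhammer

section OrderedRing

variable {R : Type*} [CommRing R] [LinearOrder R] [IsStrictOrderedRing R]

theorem fwdDiff_iter_eval_descPochhammer_mul_nonneg {v : R[X]} {M : ℕ}
    (hv : ∀ i ≤ v.natDegree, 0 < Δ_[1] ^[i] v.eval (M : R)) (n : ℕ) :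
    0 ≤ Δ_[1] ^[n] (descPochhammer R M * v).eval 0 := by
  simp only [eval_mul]
  rcases lt_or_ge n M with hn | hn
  · rw [fwdDiff_iter_descPochhammer_mul_of_lt _ hn]
  obtain ⟨i, rfl⟩ := Nat.exists_eq_add_of_le hn
  rw [fwdDiff_iter_add_descPochhammer_mul]
  rcases le_or_gt i v.natDegree with hi | hi
  · exact mul_nonneg (Nat.cast_nonneg _) (hv i hi).le
  · rw [fwdDiff_iter_eq_zero_of_degree_lt hi, Pi.zero_apply, mul_zero]

theorem fwdDiff_iter_eval_descPochhammer_mul_pos {v : R[X]} {M : ℕ}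
    (hv : ∀ i ≤ v.natDegree, 0 < Δ_[1] ^[i] v.eval (M : R)) {n : ℕ}
    (hn : n ∈ Icc M (M + v.natDegree)) :
    0 < Δ_[1] ^[n] (descPochhammer R M * v).eval 0 := by
  simp only [eval_mul]
  obtain ⟨hMn, hnD⟩ := mem_Icc.mp hn
  obtain ⟨i, rfl⟩ := Nat.exists_eq_add_of_le hMn
  rw [fwdDiff_iter_add_descPochhammer_mul]
  exact mul_pos (Nat.cast_pos.mpr (Nat.descFactorial_pos.mpr (by omega))) (hv i (by omega))

theorem fwdDiff_iter_eval_nonneg_of_eval_eq_one {u : R[X]} {M : ℕ}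
    (hu : ∀ k < M, u.eval (k : R) = 1) {n : ℕ} (hn : n < M ∨ u.natDegree < n) :
    0 ≤ Δ_[1] ^[n] u.eval 0 := by
  rcases hn with hn | hn
  · rcases Nat.eq_zero_or_pos n with rfl | hn0
    · have h0 : u.eval 0 = 1 := by exact_mod_cast hu 0 hn
      simp [h0]
    · rw [fwdDiff_iter_congr (g := (C 1 : R[X]).eval) fun k hk ↦ by simpa using hu k (by omega),
        fwdDiff_iter_eq_zero_of_degree_lt (by simpa using hn0), Pi.zero_apply]
  · rw [fwdDiff_iter_eq_zero_of_degree_lt hn, Pi.zero_apply]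

end OrderedRing

theorem exists_forall_nonneg_mul_add {𝕜 ι : Type*} [Field 𝕜] [LinearOrder 𝕜]
    [IsStrictOrderedRing 𝕜] {a b : ι → 𝕜} (s : Finset ι) (ha : ∀ i, 0 ≤ a i)
    (has : ∀ i ∈ s, 0 < a i) (hb : ∀ i ∉ s, 0 ≤ b i) : ∃ c, ∀ i, 0 ≤ c * a i + b i := by
  have hlarge : ∀ᶠ c in atTop, 0 ≤ c ∧ ∀ i ∈ s, 0 ≤ c * a i + b i :=
    (eventually_ge_atTop 0).and <| (eventually_all_finset s).2 fun i hi ↦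
      (tendsto_atTop_add_const_right _ _
        (tendsto_id.atTop_mul_const (has i hi))).eventually_ge_atTop 0
  obtain ⟨c, hc0, hc⟩ := hlarge.exists
  refine ⟨c, fun i ↦ ?_⟩
  by_cases hi : i ∈ s
  · exact hc i hi
  · exact add_nonneg (mul_nonneg hc0 (ha i)) (hb i hi)

theorem exists_eval_mul_eq_one {K : Type*} [Field K] [CharZero K] {p : K[X]} {M : ℕ}
    (hp : ∀ k < M, p.eval (k : K) ≠ 0) :
    ∃ t : K[X], t.degree < M ∧ ∀ k < M, (p * t).eval (k : K) = 1 := by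
  classical
  set nodes := (range M).image (Nat.cast : ℕ → K)
  refine ⟨Lagrange.interpolate nodes id fun x ↦ (p.eval x)⁻¹, ?_, fun k hk ↦ ?_⟩
  · have := Lagrange.degree_interpolate_lt (r := fun x ↦ (p.eval x)⁻¹)
      (Set.injOn_id (nodes : Set K))
    rwa [card_image_of_injective _ Nat.cast_injective, card_range] at this
  · have hnode : (k : K) ∈ nodes := mem_image_of_mem _ (mem_range.mpr hk)
    have := Lagrange.eval_interpolate_at_node (fun x ↦ (p.eval x)⁻¹) (Set.injOn_id _) hnode
    rw [id_eq] at this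
    rw [eval_mul, this, mul_inv_cancel₀ (hp k hk)]

theorem Polynomial.eventually_pos_of_leadingCoeff_pos {𝕜 : Type*} [NormedField 𝕜] [LinearOrder 𝕜]
    [IsStrictOrderedRing 𝕜] [OrderTopology 𝕜] {P : 𝕜[X]} (hP : 0 < P.leadingCoeff) :
    ∀ᶠ x in atTop, 0 < P.eval x := by
  rcases le_or_gt P.degree 0 with hdeg | hdeg
  · rw [eq_C_of_degree_le_zero hdeg] at hP ⊢
    exact Eventually.of_forall fun _ ↦ by simpa using hP
  · exact (P.tendsto_atTop_of_leadingCoeff_nonneg hdeg hP.le).eventually_gt_atTop 0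

theorem eval_iterate_deltaP (n : ℕ) (f : ℚ[X]) :
    (deltaP^[n] f).eval = Δ_[1] ^[n] f.eval := by
  have : Function.Semiconj (fun g : ℚ[X] ↦ g.eval) deltaP (Δ_[1]) := fun g ↦ by
    ext x; simp [deltaP, fwdDiff]
  exact this.iterate_right n f

theorem natDegree_deltaP_lt {f : ℚ[X]} (hf : 0 < f.natDegree) :
    (deltaP f).natDegree < f.natDegree := by
  have hX : (X + 1 : ℚ[X]).natDegree = 1 := by rw [← C_1, natDegree_X_add_C]
  have hcomp : (f.comp (X + 1)).natDegree = f.natDegree := by simp [natDegree_comp, hX]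
  have hne : f.comp (X + 1) ≠ 0 := ne_zero_of_natDegree_gt (hcomp ▸ hf)
  have hdeg : (f.comp (X + 1)).degree = f.degree := by
    rw [degree_eq_natDegree hne, hcomp, degree_eq_natDegree (ne_zero_of_natDegree_gt hf)]
  have hlc : (f.comp (X + 1)).leadingCoeff = f.leadingCoeff := by
    rw [leadingCoeff_comp (by rw [hX]; exact one_ne_zero), ← C_1, leadingCoeff_X_add_C,
      one_pow, mul_one]
  by_cases h0 : deltaP f = 0
  · simpa [h0] using hf
  refine natDegree_lt_natDegree h0 ?_
  rw [← hdeg]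
  exact degree_sub_lt_left hdeg hne hlc

theorem natDegree_iterate_deltaP_le (i : ℕ) (f : ℚ[X]) :
    (deltaP^[i] f).natDegree ≤ f.natDegree - i := by
  induction i with
  | zero => simp
  | succ i ih =>
    rw [Function.iterate_succ_apply']
    rcases Nat.eq_zero_or_pos (deltaP^[i] f).natDegree with h | h
    · rw [eq_C_of_natDegree_eq_zero h]; simp [deltaP]
    · have := natDegree_deltaP_lt h; omega

theorem leadingCoeff_iterate_deltaP_pos {v : ℚ[X]} (hv : 0 < v.leadingCoeff) {i : ℕ}
    (hi : i ≤ v.natDegree) : 0 < (deltaP^[i] v).leadingCoeff := by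
  set P := deltaP^[i] v
  have hfac : Δ_[1] ^[v.natDegree - i] P.eval 0 = v.leadingCoeff * v.natDegree.factorial := by
    rw [eval_iterate_deltaP, ← Function.iterate_add_apply, Nat.sub_add_cancel hi,
      fwdDiff_iter_degree_eq_factorial, Pi.smul_apply, Pi.natCast_apply, smul_eq_mul]
  have hfac_pos : 0 < v.leadingCoeff * v.natDegree.factorial := by positivity
  have hdeg : P.natDegree = v.natDegree - i := by
    refine le_antisymm (natDegree_iterate_deltaP_le i v) (not_lt.mp fun hlt ↦ hfac_pos.ne ?_)
    rw [← hfac, fwdDiff_iter_eq_zero_of_degree_lt hlt, Pi.zero_apply]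
  rw [← hdeg, fwdDiff_iter_degree_eq_factorial, Pi.smul_apply, Pi.natCast_apply,
    smul_eq_mul] at hfac
  exact pos_of_mul_pos_left (hfac ▸ hfac_pos) (Nat.cast_nonneg _)

theorem eventually_fwdDiff_iter_eval_pos {v : ℚ[X]} (hv : 0 < v.leadingCoeff) :
    ∀ᶠ m : ℕ in atTop, ∀ i ≤ v.natDegree, 0 < Δ_[1] ^[i] v.eval (m : ℚ) := by
  have h : ∀ i ∈ range (v.natDegree + 1), ∀ᶠ m : ℕ in atTop, 0 < Δ_[1] ^[i] v.eval (m : ℚ) :=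
    fun i hi ↦ by
      rw [← eval_iterate_deltaP]
      exact tendsto_natCast_atTop_atTop.eventually
        (eventually_pos_of_leadingCoeff_pos (leadingCoeff_iterate_deltaP_pos hv
          (Nat.lt_succ_iff.mp (mem_range.mp hi))))
  filter_upwards [(eventually_all_finset _).2 h] with m hm i hi
  exact hm i (mem_range.mpr (Nat.lt_succ_of_le hi))

/-- For a polynomial `p` nonvanishing at all nonnegative integers, there is a multiplier `s`
making all binomial-basis coefficients of `p·s` nonnegative, with positive constant term.
(The binomial-basis coefficients of `f` are `(Δⁿf)(0)`.) -/
theorem multiply_to_get_pos_coeffs (p : Polynomial ℚ) (h : ∀ n : ℕ, p.eval (n : ℚ) ≠ 0) :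
    ∃ s : Polynomial ℚ,
      (∀ n : ℕ, 0 ≤ (deltaP^[n] (p * s)).eval 0) ∧ 0 < p.eval 0 * s.eval 0 := by
  have hp : p ≠ 0 := by rintro rfl; exact h 0 eval_zero
  set v := p * p
  have hv : 0 < v.leadingCoeff := by
    rw [leadingCoeff_mul]; exact mul_self_pos.mpr (leadingCoeff_ne_zero.mpr hp)
  obtain ⟨M, hM, hM0⟩ :=
    ((eventually_fwdDiff_iter_eval_pos hv).and (eventually_gt_atTop 0)).exists
  obtain ⟨t, ht, hpt⟩ := exists_eval_mul_eq_one fun k (_ : k < M) ↦ h k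
  have hdeg : (p * t).natDegree ≤ M + v.natDegree := natDegree_mul_le.trans <| by
    rw [natDegree_mul hp hp]
    have := natDegree_le_iff_degree_le.mpr ht.le
    omega
  obtain ⟨c, hc⟩ := exists_forall_nonneg_mul_add (b := fun n ↦ Δ_[1] ^[n] (p * t).eval 0)
    (Icc M (M + v.natDegree)) (fwdDiff_iter_eval_descPochhammer_mul_nonneg hM)
    (fun n hn ↦ fwdDiff_iter_eval_descPochhammer_mul_pos hM hn)
    (fun n hn ↦ fwdDiff_iter_eval_nonneg_of_eval_eq_one hpt (by rw [mem_Icc] at hn; omega))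
  set s := C c * (descPochhammer ℚ M * p) + t
  have hps : (p * s).eval = c • (descPochhammer ℚ M * v).eval + (p * t).eval := by
    ext x
    simp only [s, v, eval_mul, eval_add, eval_C, Pi.add_apply, Pi.smul_apply, smul_eq_mul]
    ring
  refine ⟨s, fun n ↦ ?_, ?_⟩
  · rw [congrFun (eval_iterate_deltaP n _) 0, hps, fwdDiff_iter_add, fwdDiff_iter_const_smul]
    exact hc n
  · have h0 : (p * t).eval 0 = 1 := by exact_mod_cast hpt 0 hM0
    rw [← eval_mul, congrFun hps 0, Pi.add_apply, h0]
    simp [hM0.ne']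
end

section
/- Let K be a number field and S a subring of K containing the ring of integers O_K. If some element x of S has negative valuation v_p(x) < 0 at a prime ideal p of O_K, then the fractional ideal p^{-1} is contained in S. -/
/-!
Let `J = O_K + x O_K`. Since `J J⁻¹ = O_K` in a Dedekind domain, `1 = a + b x` with
`a, b ∈ J⁻¹`, i.e. `a, b, a x, b x ∈ O_K`. As `v_p(x) < 0`, integrality of `a x` and `b x` forces
`a, b ∈ p`. So for `y ∈ p⁻¹` both `y a` and `y b` are integral, and `y = y a + x (y b) ∈ S`.
-/

open IsDedekindDomain IsLocalization nonZeroDivisors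

theorem IsDedekindDomain.exists_add_mul_eq_one {R K : Type*} [CommRing R] [IsDedekindDomain R]
    [Field K] [Algebra R K] [IsFractionRing R K] (x : K) :
    ∃ a b : R, IsInteger R (algebraMap R K a * x) ∧ IsInteger R (algebraMap R K b * x) ∧
      algebraMap R K a + algebraMap R K b * x = 1 := by
  set J : FractionalIdeal R⁰ K := 1 + FractionalIdeal.spanSingleton R⁰ x
  have hJ : J ≠ 0 := ne_bot_of_le_ne_bot one_ne_zero le_self_add
  have mem_inv : ∀ {z : K}, z ∈ J⁻¹ → ∃ c : R, algebraMap R K c = z ∧ IsInteger R (z * x) := by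
    intro z hz
    rw [FractionalIdeal.mem_inv_iff hJ] at hz
    obtain ⟨c, hc⟩ := (FractionalIdeal.mem_one_iff _).mp
      (hz 1 ((le_self_add : 1 ≤ J) (FractionalIdeal.one_mem_one _)))
    exact ⟨c, by simpa using hc, (FractionalIdeal.mem_one_iff _).mp
      (hz x ((le_add_self : _ ≤ J) (FractionalIdeal.mem_spanSingleton_self _ _)))⟩
  have one_mem : (1 : K) ∈ J⁻¹ + FractionalIdeal.spanSingleton R⁰ x * J⁻¹ := by
    rw [← one_mul J⁻¹, ← mul_assoc, mul_one, ← add_mul, mul_inv_cancel₀ hJ]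
    exact FractionalIdeal.one_mem_one _
  obtain ⟨a', ha', c, hc, hac⟩ := (FractionalIdeal.mem_add _ _ _).mp one_mem
  obtain ⟨b', hb', rfl⟩ := FractionalIdeal.mem_singleton_mul.mp hc
  obtain ⟨a, rfl, ha⟩ := mem_inv ha'
  obtain ⟨b, rfl, hb⟩ := mem_inv hb'
  exact ⟨a, b, ha, hb, by rw [← hac, mul_comm]⟩

theorem IsDedekindDomain.HeightOneSpectrum.mem_asIdeal_of_isInteger_mul {R K : Type*}
    [CommRing R] [IsDedekindDomain R] [Field K] [Algebra R K] [IsFractionRing R K]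
    (v : HeightOneSpectrum R) {x : K} (hx : 1 < v.valuation K x) {r : R}
    (hr : IsInteger R (algebraMap R K r * x)) :
    r ∈ v.asIdeal := by
  obtain ⟨s, hs⟩ := hr
  have hle : v.valuation K (algebraMap R K r) * v.valuation K x ≤ 1 := by
    rw [← map_mul, ← hs]
    exact v.valuation_le_one s
  rw [← v.valuation_lt_one_iff_mem (K := K)]
  by_contra! h
  exact (one_lt_mul_of_le_of_lt h hx).not_ge hle

/-- If `S` is an overring of the ring of integers of a number field `K`, and some `x ∈ S` has
negative valuation at a prime ideal `v` (i.e. multiplicative valuation `> 1`), then the inverse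
fractional ideal `v⁻¹ = {y ∈ K ∣ y·v ⊆ O_K}` is contained in `S`. -/
theorem inv_prime_ideal_subset_overring (K : Type*) [Field K] [NumberField K]
    (S : Subring K) (hS : ∀ x : K, IsIntegral ℤ x → x ∈ S)
    (v : HeightOneSpectrum (NumberField.RingOfIntegers K))
    (x : K) (hx : x ∈ S) (hneg : 1 < v.valuation K x) :
    ∀ y : K, (∀ z : NumberField.RingOfIntegers K, z ∈ v.asIdeal → IsIntegral ℤ (y * (z : K))) →
      y ∈ S := by
  intro y hy
  obtain ⟨a, b, ha, hb, hab⟩ := exists_add_mul_eq_one (R := NumberField.RingOfIntegers K) x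
  have hya : y * a ∈ S := hS _ (hy a (v.mem_asIdeal_of_isInteger_mul hneg ha))
  have hyb : y * b ∈ S := hS _ (hy b (v.mem_asIdeal_of_isInteger_mul hneg hb))
  have hy_eq : y = y * a + x * (y * b) := by
    linear_combination (-y) * hab
  rw [hy_eq]
  exact S.add_mem hya (S.mul_mem hx hyb)
end

section
/- Let K be a number field and S a subring of K containing O_K. Let Q be the set of prime ideals q of O_K such that every element of S has nonnegative q-adic valuation. Then S equals the set of all x in K with v_q(x) >= 0 for every q in Q. -/
open IsDedekindDomain

/-!
If `x ∉ S`, the denominator ideal `{s ∈ S | s x ∈ S}` is proper, so it lies in a maximal ideal `M`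
of `S`. Its contraction `p` to `R` is nonzero, since it contains a denominator of `x`. Every
`s ∈ S` is `p`-integral: otherwise `s⁻¹ = n / d` with `n ∈ p`, `d ∉ p`, and `d = n s ∈ M`.
On the other hand `x` is not `p`-integral: otherwise `x = n / d` with `d ∉ p`, but `d` lies in
the denominator ideal, hence in `M`.
-/

namespace Subring

variable {K : Type*} [CommRing K]

def denominatorIdeal (S : Subring K) (x : K) : Ideal S where
  carrier := {s | (s : K) * x ∈ S}
  add_mem' {a b} ha hb := by
    show ((a + b : S) : K) * x ∈ S
    rw [coe_add, add_mul]
    exact S.add_mem ha hb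
  zero_mem' := by
    show ((0 : S) : K) * x ∈ S
    rw [ZeroMemClass.coe_zero, zero_mul]
    exact S.zero_mem
  smul_mem' c s hs := by
    show ((c * s : S) : K) * x ∈ S
    rw [coe_mul, mul_assoc]
    exact S.mul_mem c.2 hs

theorem mem_denominatorIdeal {S : Subring K} {x : K} {s : S} :
    s ∈ S.denominatorIdeal x ↔ (s : K) * x ∈ S :=
  Iff.rfl

theorem denominatorIdeal_ne_top {S : Subring K} {x : K} (hx : x ∉ S) :
    S.denominatorIdeal x ≠ ⊤ := by
  rw [Ne, Ideal.eq_top_iff_one, mem_denominatorIdeal, OneMemClass.coe_one, one_mul]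
  exact hx

end Subring

namespace IsDedekindDomain.HeightOneSpectrum

variable {R K : Type*} [CommRing R] [IsDedekindDomain R] [Field K] [Algebra R K]
  [IsFractionRing R K] {S : Subring K}

theorem valuation_le_one_of_asIdeal_eq_comap (hRS : ∀ r, algebraMap R K r ∈ S) {P : Ideal S}
    {v : HeightOneSpectrum R} (hv : v.asIdeal = P.comap ((algebraMap R K).codRestrict S hRS))
    {s : K} (hs : s ∈ S) :
    v.valuation K s ≤ 1 := by
  by_contra! h
  have hs0 : s ≠ 0 := by rintro rfl; simp at h
  have hinv : v.valuation K s⁻¹ < 1 := by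
    rw [map_inv₀]; exact inv_lt_one_of_one_lt₀ h
  obtain ⟨n, ⟨d, hdv⟩, hnd⟩ := exists_primeCompl_mul_eq_of_integer v s⁻¹ hinv.le
  change d ∉ v.asIdeal at hdv
  have hn : n ∈ v.asIdeal := by
    refine (valuation_lt_one_iff_mem (K := K) v n).mp ?_
    change v.valuation K (algebraMap R K n) < 1
    rwa [← hnd, map_mul, (valuation_eq_one_iff_notMem v).mpr hdv, mul_one]
  have hd : algebraMap R K d = algebraMap R K n * s := by
    rw [← hnd, mul_comm s⁻¹, mul_assoc, inv_mul_cancel₀ hs0, mul_one]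
  refine hdv ?_
  rw [hv, Ideal.mem_comap] at hn ⊢
  have hfd : (algebraMap R K).codRestrict S hRS d =
      (algebraMap R K).codRestrict S hRS n * ⟨s, hs⟩ :=
    Subtype.ext hd
  rw [hfd]
  exact P.mul_mem_right _ hn

theorem exists_forall_valuation_le_one_and_one_lt_of_notMem (hRS : ∀ r, algebraMap R K r ∈ S)
    {x : K} (hx : x ∉ S) :
    ∃ v : HeightOneSpectrum R, (∀ s ∈ S, v.valuation K s ≤ 1) ∧ 1 < v.valuation K x := by
  set f := (algebraMap R K).codRestrict S hRS
  obtain ⟨M, hM, hxM⟩ := Ideal.exists_le_maximal _ (Subring.denominatorIdeal_ne_top hx)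
  obtain ⟨a, b, hb, hab⟩ := IsFractionRing.div_surjective (A := R) x
  have hbM : f b ∈ M := by
    refine hxM (Subring.mem_denominatorIdeal.mpr ?_)
    change algebraMap R K b * x ∈ S
    rw [← hab, mul_div_cancel₀ _ (IsFractionRing.to_map_ne_zero_of_mem_nonZeroDivisors hb)]
    exact hRS a
  let v : HeightOneSpectrum R :=
    ⟨M.comap f, hM.isPrime.comap f, fun h ↦ nonZeroDivisors.ne_zero hb <| by
      rw [← Ideal.mem_bot, ← h]; exact hbM⟩
  refine ⟨v, fun s ↦ valuation_le_one_of_asIdeal_eq_comap hRS (v := v) rfl, ?_⟩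
  by_contra! hxv
  obtain ⟨n, ⟨d, hdv⟩, hnd⟩ := exists_primeCompl_mul_eq_of_integer v x hxv
  refine hdv (hxM (Subring.mem_denominatorIdeal.mpr ?_))
  rw [mul_comm]
  exact hnd ▸ hRS n

theorem _root_.Subring.coe_eq_setOf_forall_valuation_le_one (hRS : ∀ r, algebraMap R K r ∈ S) :
    (S : Set K) = {x : K | ∀ v : HeightOneSpectrum R,
      (∀ s ∈ S, v.valuation K s ≤ 1) → v.valuation K x ≤ 1} := by
  ext x
  refine ⟨fun hx v hv ↦ hv x hx, fun hx ↦ ?_⟩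
  by_contra hxS
  obtain ⟨v, hSv, hxv⟩ := exists_forall_valuation_le_one_and_one_lt_of_notMem hRS hxS
  exact (hx v hSv).not_gt hxv

end IsDedekindDomain.HeightOneSpectrum

/-- An overring `S` of the ring of integers of a number field `K` equals the set of elements of
`K` with nonnegative valuation (multiplicative valuation `≤ 1`) at every prime ideal `v` at which
all of `S` has nonnegative valuation. -/
theorem overring_eq_valuation_description (K : Type*) [Field K] [NumberField K]
    (S : Subring K) (hS : ∀ x : K, IsIntegral ℤ x → x ∈ S) :
    (S : Set K) = {x : K |
      ∀ v : HeightOneSpectrum (NumberField.RingOfIntegers K),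
        (∀ s ∈ S, v.valuation K s ≤ 1) → v.valuation K x ≤ 1} :=
  S.coe_eq_setOf_forall_valuation_le_one fun r ↦
    hS _ (NumberField.RingOfIntegers.isIntegral_coe r)
end

section
/- Let a be an algebraic integer and p a prime. If z is a root of the minimal polynomial of a in the p-adic integers Z_p, and P is the corresponding prime ideal of O_{Q(a)} above p (with ramification index 1 and residue degree 1), then for every k >= 0 the P-adic valuation of binom(a,k) is nonnegative. -/
/-!
The embedding `φ` sends `binom(a, k)` to `binom(z, k) = z(z-1)⋯(z-k+1)/k!`, and this lies in `ℤ_[p]`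
because `ℤ_[p]` is a binomial ring: the binomial polynomials are integer-valued on `ℕ`, which is
dense in `ℤ_[p]`.
-/

open Finset

theorem Ring.factorial_mul_choose_eq_prod_range {R : Type*} [CommRing R] [BinomialRing R]
    (r : R) (n : ℕ) : (n.factorial : R) * Ring.choose r n = ∏ j ∈ range n, (r - j) := by
  rw [← nsmul_eq_mul, ← Ring.descPochhammer_eq_factorial_smul_choose,
    ← descPochhammer_eval_eq_prod_range, ← Polynomial.aeval_eq_smeval, Polynomial.aeval_def,
    ← Polynomial.eval_map, descPochhammer_map]

namespace PadicInt

variable {p : ℕ} [Fact p.Prime]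

@[simp, norm_cast]
theorem coe_prod {α : Type*} (s : Finset α) (f : α → ℤ_[p]) :
    (((∏ i ∈ s, f i) : ℤ_[p]) : ℚ_[p]) = ∏ i ∈ s, (f i : ℚ_[p]) :=
  map_prod Coe.ringHom f s

theorem coe_choose (z : ℤ_[p]) (k : ℕ) :
    ((Ring.choose z k : ℤ_[p]) : ℚ_[p]) =
      (∏ i ∈ range k, ((z : ℚ_[p]) - i)) / k.factorial := by
  rw [eq_div_iff (mod_cast k.factorial_ne_zero), mul_comm, ← coe_natCast, ← coe_mul,
    Ring.factorial_mul_choose_eq_prod_range]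
  simp

end PadicInt

theorem binom_valuation_nonneg_general (p : ℕ) [Fact p.Prime] (a : ℂ)
    (z : ℤ_[p])
    (φ : (IntermediateField.adjoin ℚ ({a} : Set ℂ)) →+* ℚ_[p])
    (hφ : φ ⟨a, IntermediateField.mem_adjoin_simple_self ℚ a⟩ = (z : ℚ_[p])) (k : ℕ) :
    ‖φ ((∏ i ∈ Finset.range k,
          ((⟨a, IntermediateField.mem_adjoin_simple_self ℚ a⟩ :
              IntermediateField.adjoin ℚ ({a} : Set ℂ)) - (i : _))) /
        (k.factorial : _))‖ ≤ 1 := by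
  rw [map_div₀, map_prod, map_natCast]
  simp only [map_sub, map_natCast, hφ, ← PadicInt.coe_choose]
  exact PadicInt.norm_le_one _

/-- Let `a` be an algebraic integer and `p` a prime. A root `z ∈ ℤ_p` of the minimal polynomial
of `a` determines (via the corresponding embedding `φ : ℚ(a) → ℚ_p`, `φ(a) = z`) a prime ideal
`P` of `O_{ℚ(a)}` above `p` with ramification index `1` and residue degree `1`, whose valuation
is `v_P = v_p ∘ φ`. Then for every `k ≥ 0` the `P`-adic valuation of `binom(a,k)` is
nonnegative, i.e. `‖φ(binom(a,k))‖_p ≤ 1`. -/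
theorem binom_valuation_nonneg (p : ℕ) [Fact p.Prime] (a : ℂ) (ha : IsIntegral ℤ a)
    (z : ℤ_[p]) (hz : Polynomial.aeval z (minpoly ℤ a) = 0)
    (φ : (IntermediateField.adjoin ℚ ({a} : Set ℂ)) →+* ℚ_[p])
    (hφ : φ ⟨a, IntermediateField.mem_adjoin_simple_self ℚ a⟩ = (z : ℚ_[p])) (k : ℕ) :
    ‖φ ((∏ i ∈ Finset.range k,
          ((⟨a, IntermediateField.mem_adjoin_simple_self ℚ a⟩ :
              IntermediateField.adjoin ℚ ({a} : Set ℂ)) - (i : _))) /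
        (k.factorial : _))‖ ≤ 1 :=
  binom_valuation_nonneg_general p a z φ hφ k
end
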